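/- Let M = {(x,y,z) ∈ ℝ³ : y ≠ 0} with the 1-form θ = (1/y) dx − y dz and complex vector field T₁ = (y/(1+y²)) ∂/∂x − (iy/2) ∂/∂y + (1/(y(1+y²))) ∂/∂z. Then L_θ(T₁, T₁̄) := (i/2) θ([T₁, T₁̄]) = 1/(1+y²) > 0; in particular the Levi form of this CR structure is positive definite. -/

import Mathlib

/-!
STATEMENT 1.  On M = {(x,y,z) ∈ ℝ³ : y ≠ 0} with the 1-form θ = (1/y)dx − y dz
and T₁ = (y/(1+y²)) ∂/∂x − (iy/2) ∂/∂y + (1/(y(1+y²))) ∂/∂z one has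
L_θ(T₁,T₁̄) := (i/2) θ([T₁,T₁̄]) = 1/(1+y²) > 0; in particular the Levi form of
this CR structure is positive definite.

Complex vector fields are encoded by coefficient functions, the bracket is
the ℂ-bilinear extension of the Lie bracket, and θ is extended ℂ-linearly.
-/

noncomputable section

open Complex

/-- Partial derivative of a ℂ-valued function on ℝ³ in the `i`-th coordinate direction. -/
def pder (i : Fin 3) (f : ℝ × ℝ × ℝ → ℂ) (p : ℝ × ℝ × ℝ) : ℂ :=
  fderiv ℝ f p (![((1:ℝ),(0:ℝ),(0:ℝ)), (0,1,0), (0,0,1)] i)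

/-- Lie bracket of complex vector fields on (an open subset of) ℝ³. -/
def lieB (X Y : Fin 3 → (ℝ × ℝ × ℝ → ℂ)) (k : Fin 3) (p : ℝ × ℝ × ℝ) : ℂ :=
  ∑ i : Fin 3, (X i p * pder i (Y k) p - Y i p * pder i (X k) p)

/-- The CR generator T₁. -/
def T1 : Fin 3 → (ℝ × ℝ × ℝ → ℂ) := fun k p =>
  ![ (p.2.1 : ℂ) / (1 + (p.2.1 : ℂ)^2),
     -(I * (p.2.1 : ℂ)) / 2,
     1 / ((p.2.1 : ℂ) * (1 + (p.2.1 : ℂ)^2)) ] k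

/-- The complex conjugate T₁̄ of T₁. -/
def T1bar : Fin 3 → (ℝ × ℝ × ℝ → ℂ) := fun k p => starRingEnd ℂ (T1 k p)

/-- The ℂ-linear extension of θ = (1/y) dx − y dz applied to a complex
vector field: θ(Σ aᵢ ∂ᵢ) = a₁/y − y a₃. -/
def thetaApp (Z : Fin 3 → (ℝ × ℝ × ℝ → ℂ)) (p : ℝ × ℝ × ℝ) : ℂ :=
  (1 / (p.2.1 : ℂ)) * Z 0 p - (p.2.1 : ℂ) * Z 2 p

open ContinuousLinearMap in
lemma pder_comp (g : ℝ → ℂ) (g' : ℂ) (p : ℝ × ℝ × ℝ) (h : HasDerivAt g g' p.2.1) :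
    pder 0 (fun q => g q.2.1) p = 0 ∧ pder 1 (fun q => g q.2.1) p = g'
      ∧ pder 2 (fun q => g q.2.1) p = 0 := by
  have L : HasFDerivAt (fun q : ℝ × ℝ × ℝ => q.2.1)
      ((fst ℝ ℝ ℝ).comp (snd ℝ ℝ (ℝ × ℝ))) p :=
    ((fst ℝ ℝ ℝ).comp (snd ℝ ℝ (ℝ × ℝ))).hasFDerivAt
  have H := (h.hasFDerivAt.comp p L)
  have hf : (fun q : ℝ × ℝ × ℝ => g q.2.1) = g ∘ (fun q => q.2.1) := rfl
  refine ⟨?_, ?_, ?_⟩ <;> simp [pder, hf, H.fderiv]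

/-- L_θ(T₁,T₁̄) = (i/2) θ([T₁,T₁̄]) = 1/(1+y²) > 0 : the Levi form is positive definite. -/
theorem levi_form_positive (p : ℝ × ℝ × ℝ) (hy : p.2.1 ≠ 0) :
    (I / 2) * thetaApp (lieB T1 T1bar) p = 1 / (1 + (p.2.1 : ℂ)^2)
      ∧ 0 < 1 / (1 + p.2.1 ^ 2) := by
  set y : ℝ := p.2.1 with hyd
  have h1 : (1:ℂ) + (y:ℂ)^2 ≠ 0 := by
    have : ((1 + y^2 : ℝ) : ℂ) ≠ 0 := by
      simp only [ne_eq, ofReal_eq_zero]; positivity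
    push_cast at this; exact this
  have hyC : (y:ℂ) ≠ 0 := ofReal_ne_zero.mpr hy
  have hR : HasDerivAt (fun t : ℝ => (t:ℂ)) 1 y := by
    exact Complex.ofRealCLM.hasDerivAt
  have hsq : HasDerivAt (fun t : ℝ => (t:ℂ)^2) (2*(y:ℂ)) y := by
    have := hR.mul hR
    simp only [sq]; exact this.congr_deriv (by ring)
  have hden : HasDerivAt (fun t : ℝ => 1 + (t:ℂ)^2) (2*(y:ℂ)) y := by
    simpa using hsq.const_add 1
  have ha : HasDerivAt (fun t : ℝ => (t:ℂ)/(1+(t:ℂ)^2))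
      ((1-(y:ℂ)^2)/(1+(y:ℂ)^2)^2) y := by
    have := hR.div hden h1
    exact this.congr_deriv (by ring)
  have hb : HasDerivAt (fun t : ℝ => -(I*(t:ℂ))/2) (-(I)/2) y := by
    simpa using ((hR.const_mul I).neg).div_const 2
  have hden2 : HasDerivAt (fun t : ℝ => (t:ℂ)*(1+(t:ℂ)^2))
      (1 + 3*(y:ℂ)^2) y := by
    have := hR.mul hden
    exact this.congr_deriv (by ring)
  have hc : HasDerivAt (fun t : ℝ => 1/((t:ℂ)*(1+(t:ℂ)^2)))
      (-(1+3*(y:ℂ)^2)/((y:ℂ)*(1+(y:ℂ)^2))^2) y := by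
    have := (hasDerivAt_const y (1:ℂ)).div hden2 (mul_ne_zero hyC h1)
    exact this.congr_deriv (by ring)
  have A := pder_comp _ _ p ha
  have B := pder_comp _ _ p hb
  have C := pder_comp _ _ p hc
  have A' := pder_comp _ _ p ha.star
  have B' := pder_comp _ _ p hb.star
  have C' := pder_comp _ _ p hc.star
  refine ⟨?_, by positivity⟩
  have e10 : pder 1 (T1 0) p = (1-(y:ℂ)^2)/(1+(y:ℂ)^2)^2 := A.2.1
  have e00 : pder 0 (T1 0) p = 0 := A.1
  have e20 : pder 2 (T1 0) p = 0 := A.2.2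
  have f10 : pder 1 (T1 1) p = -(I)/2 := B.2.1
  have f00 : pder 0 (T1 1) p = 0 := B.1
  have f20 : pder 2 (T1 1) p = 0 := B.2.2
  have g10 : pder 1 (T1 2) p = -(1+3*(y:ℂ)^2)/((y:ℂ)*(1+(y:ℂ)^2))^2 := C.2.1
  have g00 : pder 0 (T1 2) p = 0 := C.1
  have g20 : pder 2 (T1 2) p = 0 := C.2.2
  have e10' : pder 1 (T1bar 0) p = starRingEnd ℂ ((1-(y:ℂ)^2)/(1+(y:ℂ)^2)^2) := A'.2.1
  have e00' : pder 0 (T1bar 0) p = 0 := A'.1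
  have e20' : pder 2 (T1bar 0) p = 0 := A'.2.2
  have f10' : pder 1 (T1bar 1) p = starRingEnd ℂ (-(I)/2) := B'.2.1
  have f00' : pder 0 (T1bar 1) p = 0 := B'.1
  have f20' : pder 2 (T1bar 1) p = 0 := B'.2.2
  have g10' : pder 1 (T1bar 2) p = starRingEnd ℂ (-(1+3*(y:ℂ)^2)/((y:ℂ)*(1+(y:ℂ)^2))^2) := C'.2.1
  have g00' : pder 0 (T1bar 2) p = 0 := C'.1
  have g20' : pder 2 (T1bar 2) p = 0 := C'.2.2
  -- clean up the conjugated derivative values (they are real)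
  have cA : starRingEnd ℂ ((1-(y:ℂ)^2)/(1+(y:ℂ)^2)^2) = (1-(y:ℂ)^2)/(1+(y:ℂ)^2)^2 := by
    simp [map_div₀, conj_ofReal, map_ofNat]
  have cC : starRingEnd ℂ (-(1+3*(y:ℂ)^2)/((y:ℂ)*(1+(y:ℂ)^2))^2)
      = -(1+3*(y:ℂ)^2)/((y:ℂ)*(1+(y:ℂ)^2))^2 := by
    simp [map_div₀, conj_ofReal, map_ofNat]
  rw [cA] at e10'
  rw [cC] at g10'
  -- values of the vector fields at p
  have v0 : T1 0 p = (y:ℂ)/(1+(y:ℂ)^2) := rfl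
  have v1 : T1 1 p = -(I*(y:ℂ))/2 := rfl
  have v2 : T1 2 p = 1/((y:ℂ)*(1+(y:ℂ)^2)) := rfl
  have w0 : T1bar 0 p = (y:ℂ)/(1+(y:ℂ)^2) := by
    show starRingEnd ℂ (T1 0 p) = _
    rw [v0]; simp [map_div₀, conj_ofReal, map_ofNat]
  have w1 : T1bar 1 p = I*(y:ℂ)/2 := by
    show starRingEnd ℂ (T1 1 p) = _
    rw [v1]; simp [map_div₀, conj_ofReal, map_ofNat]
  have w2 : T1bar 2 p = 1/((y:ℂ)*(1+(y:ℂ)^2)) := by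
    show starRingEnd ℂ (T1 2 p) = _
    rw [v2]; simp [map_div₀, conj_ofReal, map_ofNat]
  -- the bracket components
  have L0 : lieB T1 T1bar 0 p = -(I*(y:ℂ))*((1-(y:ℂ)^2)/(1+(y:ℂ)^2)^2) := by
    simp only [lieB, Fin.sum_univ_three, e00, e20, e00', e20', e10, e10', v1, w1]
    ring
  have L2 : lieB T1 T1bar 2 p = -(I*(y:ℂ))*(-(1+3*(y:ℂ)^2)/((y:ℂ)*(1+(y:ℂ)^2))^2) := by
    simp only [lieB, Fin.sum_univ_three, g00, g20, g00', g20', g10, g10', v1, w1]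
    ring
  -- put everything together
  rw [show thetaApp (lieB T1 T1bar) p
      = (1/(y:ℂ)) * lieB T1 T1bar 0 p - (y:ℂ) * lieB T1 T1bar 2 p from rfl, L0, L2]
  have hfactor : (I/2) * ((1/(y:ℂ)) * (-(I*(y:ℂ))*((1-(y:ℂ)^2)/(1+(y:ℂ)^2)^2))
        - (y:ℂ) * (-(I*(y:ℂ))*(-(1+3*(y:ℂ)^2)/((y:ℂ)*(1+(y:ℂ)^2))^2)))
      = (I*I) * (-(1/2) * ((1/(y:ℂ)) * ((y:ℂ)*((1-(y:ℂ)^2)/(1+(y:ℂ)^2)^2))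
        - (y:ℂ) * ((y:ℂ)*(-(1+3*(y:ℂ)^2)/((y:ℂ)*(1+(y:ℂ)^2))^2)))) := by ring
  rw [hfactor, Complex.I_mul_I]
  field_simp
  ring
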